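/- Let Δ ⊆ ℝ^d be a reflexive polytope and let v₁, v₂, v₃, v₄ ∈ Δ ∩ ℤ^d be ℝ-linearly independent points satisfying Cone(v₁,v₂,v₃,v₄) ∩ Δ ∩ ℤ^d = {0, v₁, v₂, v₃, v₄}. If v₁, v₂, v₃, v₄ do not lie in a common proper face of Δ, then v₁, v₂, v₃, v₄ can be extended to a ℤ-basis of ℤ^d (i.e. the cone Cone(v₁,v₂,v₃,v₄) is unimodular). -/

import Mathlib

open Pointwise

/-- The standard pairing `⟨m,n⟩ = ∑ i, mᵢ nᵢ` on `ℝ^d`. -/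
def pairing {d : ℕ} (m n : Fin d → ℝ) : ℝ := ∑ i, m i * n i

/-- A point of `ℝ^d` is a lattice point if all coordinates are integers. -/
def IsLatticePt {d : ℕ} (v : Fin d → ℝ) : Prop := ∀ i, ∃ n : ℤ, v i = (n : ℝ)

/-- The set of lattice points of `ℝ^d`. -/
def latticePts (d : ℕ) : Set (Fin d → ℝ) := {v | IsLatticePt v}

/-- A lattice polytope is the convex hull of finitely many lattice points. -/
def IsLatticePolytope {d : ℕ} (Δ : Set (Fin d → ℝ)) : Prop :=
  ∃ S : Finset (Fin d → ℝ), (S : Set (Fin d → ℝ)) ⊆ latticePts d ∧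
    Δ = convexHull ℝ (S : Set (Fin d → ℝ))

/-- The dual polytope `Δ* = {m : ⟨m,n⟩ ≥ -1 for all n ∈ Δ}`. -/
def dualPolytope {d : ℕ} (Δ : Set (Fin d → ℝ)) : Set (Fin d → ℝ) :=
  {m | ∀ n ∈ Δ, -1 ≤ pairing m n}

/-- A reflexive polytope: a lattice polytope with `0` in its interior
whose dual polytope is again a lattice polytope. -/
def IsReflexive {d : ℕ} (Δ : Set (Fin d → ℝ)) : Prop :=
  IsLatticePolytope Δ ∧ (0 : Fin d → ℝ) ∈ interior Δ ∧ IsLatticePolytope (dualPolytope Δ)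

/-- `Cone(v₁,…,v_k) = {r₁v₁ + ⋯ + r_kv_k : rᵢ ≥ 0}`. -/
def coneOf {d k : ℕ} (v : Fin k → (Fin d → ℝ)) : Set (Fin d → ℝ) :=
  {x | ∃ r : Fin k → ℝ, (∀ i, 0 ≤ r i) ∧ x = ∑ i, r i • v i}

/-- `r·∂Δ`, the frontier (topological boundary) of the dilate `rΔ`. -/
def bdry {d : ℕ} (r : ℝ) (Δ : Set (Fin d → ℝ)) : Set (Fin d → ℝ) := frontier (r • Δ)

/-- The points of `S` lie in a common proper face of `Δ`: there is `u` with
`⟨u,x⟩ ≤ 1` on `Δ` and `⟨u,v⟩ = 1` for all `v ∈ S`. -/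
def InCommonFace {d : ℕ} (Δ : Set (Fin d → ℝ)) (S : Set (Fin d → ℝ)) : Prop :=
  ∃ u : Fin d → ℝ, (∀ x ∈ Δ, pairing u x ≤ 1) ∧ ∀ v ∈ S, pairing u v = 1

/-- Coordinatewise cast of an integer vector to a real vector. -/
def toRealVec {d : ℕ} (n : Fin d → ℤ) : Fin d → ℝ := fun i => (n i : ℝ)

/-!
A lattice point `x = ∑ λᵢ vᵢ ≠ 0` with all `λᵢ ∈ [0, 1)` lies in the cone but is neither `0` nor
a `vᵢ`, so `x ∉ Δ`, and reflexivity gives a lattice point `u ∈ Δ*` with `⟨u, x⟩ ≤ -2`. The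
integers `⟨u, vᵢ⟩` are `≥ -1` and, as the `vᵢ` lie in no common face, not all `-1`; so some
`⟨u, v_k⟩ ≥ 0`, which forces `∑_{i ≠ k} λᵢ ≥ 2`. The reflected point `∑_{λᵢ ≠ 0} vᵢ - x` has
coefficients `μᵢ ≤ 1 - λᵢ` and satisfies the same bound for some `k'`; with four coefficients the
two bounds are incompatible. So the half-open box has no nonzero lattice point, the `ℤ`-span of
the `vᵢ` is saturated, the quotient of `ℤ^d` by it is free, and a basis of a complement of the
span completes the `vᵢ` to a basis of `ℤ^d`.
-/

open Set

theorem pairing_eq_dotProduct {d : ℕ} (m n : Fin d → ℝ) : pairing m n = m ⬝ᵥ n := rfl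

theorem pairing_neg_left {d : ℕ} (m n : Fin d → ℝ) : pairing (-m) n = -pairing m n :=
  neg_dotProduct m n

theorem isLatticePt_toRealVec {d : ℕ} (n : Fin d → ℤ) : IsLatticePt (toRealVec n) :=
  fun i => ⟨n i, rfl⟩

theorem isLatticePt_iff_mem_range {d : ℕ} {x : Fin d → ℝ} :
    IsLatticePt x ↔ x ∈ ((Int.castAddHom ℝ).compLeft (Fin d)).range := by
  refine ⟨fun hx => ?_, ?_⟩
  · choose n hn using hx
    exact ⟨n, funext fun i => (hn i).symm⟩
  · rintro ⟨n, rfl⟩ i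
    exact ⟨n i, rfl⟩

theorem IsLatticePt.exists_pairing_eq_intCast {d : ℕ} {m n : Fin d → ℝ} (hm : IsLatticePt m)
    (hn : IsLatticePt n) : ∃ z : ℤ, pairing m n = z := by
  choose a ha using hm
  choose b hb using hn
  exact ⟨∑ i, a i * b i, by simp [pairing, ha, hb]⟩

theorem toRealVec_eq_compLeft {d : ℕ} :
    toRealVec = ⇑((Int.castAddHom ℝ).compLeft (Fin d)) := rfl

theorem toRealVec_injective {d : ℕ} : Function.Injective (toRealVec (d := d)) :=
  Int.cast_injective.comp_left

theorem toRealVec_smul {d : ℕ} (c : ℤ) (n : Fin d → ℤ) :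
    toRealVec (c • n) = (c : ℝ) • toRealVec n := by
  rw [toRealVec_eq_compLeft, map_zsmul, Int.cast_smul_eq_zsmul]

theorem toRealVec_sum_smul {d k : ℕ} (c : Fin k → ℤ) (v : Fin k → Fin d → ℤ) :
    toRealVec (∑ i, c i • v i) = ∑ i, (c i : ℝ) • toRealVec (v i) := by
  rw [toRealVec_eq_compLeft, map_sum]
  simp only [← toRealVec_eq_compLeft, toRealVec_smul]

theorem toRealVec_sub {d : ℕ} (m n : Fin d → ℤ) :
    toRealVec (m - n) = toRealVec m - toRealVec n := by
  rw [toRealVec_eq_compLeft, map_sub]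

theorem exists_mem_dualPolytope_pairing_lt {d : ℕ} {Δ : Set (Fin d → ℝ)} (hconv : Convex ℝ Δ)
    (hclosed : IsClosed Δ) (h0 : (0 : Fin d → ℝ) ∈ Δ) {x : Fin d → ℝ} (hx : x ∉ Δ) :
    ∃ m ∈ dualPolytope Δ, pairing m x < -1 := by
  obtain ⟨f, c, hfx, hfΔ⟩ := geometric_hahn_banach_point_closed hconv hclosed hx
  have hc : c < 0 := by simpa using hfΔ 0 h0
  set m : Fin d → ℝ := fun i => f (fun j => if i = j then 1 else 0) / -c
  have hm : ∀ y, pairing m y = f y / -c := fun y => by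
    classical
    have hf := (f : (Fin d → ℝ) →ₗ[ℝ] ℝ).pi_apply_eq_sum_univ y
    rw [ContinuousLinearMap.coe_coe] at hf
    rw [hf, Finset.sum_div, pairing]
    refine Finset.sum_congr rfl fun i _ => ?_
    simp only [m, smul_eq_mul]
    ring
  refine ⟨m, fun y hy => ?_, ?_⟩
  · rw [hm, le_div_iff₀ (by linarith)]
    linarith [hfΔ y hy]
  · rw [hm, div_lt_iff₀ (by linarith)]
    linarith

theorem exists_latticePt_mem_dualPolytope_pairing_le {d : ℕ} {Δ : Set (Fin d → ℝ)}
    (hΔ : IsReflexive Δ) {x : Fin d → ℝ} (hx : IsLatticePt x) (hxΔ : x ∉ Δ) :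
    ∃ U, IsLatticePt U ∧ U ∈ dualPolytope Δ ∧ pairing U x ≤ -2 := by
  obtain ⟨⟨S, -, rfl⟩, h0, ⟨S', hS', hdual⟩⟩ := hΔ
  obtain ⟨m, hm, hmx⟩ := exists_mem_dualPolytope_pairing_lt (convex_convexHull ℝ _)
    (S.finite_toSet.isCompact_convexHull (𝕜 := ℝ)).isClosed (interior_subset h0) hxΔ
  obtain ⟨U, hUS', hUx⟩ : ∃ U ∈ S', pairing U x < -1 := by
    by_contra! h
    have hhalf : Convex ℝ {m : Fin d → ℝ | -1 ≤ pairing m x} :=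
      convex_halfSpace_ge (𝕜 := ℝ)
        ⟨fun a b => add_dotProduct a b x, fun c a => smul_dotProduct c a x⟩ _
    exact hmx.not_ge (convexHull_min h hhalf (hdual ▸ hm))
  obtain ⟨z, hz⟩ := (hS' hUS').exists_pairing_eq_intCast hx
  refine ⟨U, hS' hUS', hdual ▸ subset_convexHull ℝ _ hUS', ?_⟩
  rw [hz] at hUx ⊢
  have hz1 : z < -1 := by exact_mod_cast hUx
  exact_mod_cast (show z ≤ -2 by omega)

theorem exists_nonneg_pairing_of_not_inCommonFace {d : ℕ} {Δ S : Set (Fin d → ℝ)}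
    {U : Fin d → ℝ} (hU : IsLatticePt U) (hUΔ : U ∈ dualPolytope Δ) (hS : S ⊆ Δ ∩ latticePts d)
    (hface : ¬ InCommonFace Δ S) : ∃ y ∈ S, 0 ≤ pairing U y := by
  by_contra! hneg
  refine hface ⟨-U, fun x hx => ?_, fun y hy => ?_⟩
  · rw [pairing_neg_left]
    linarith [hUΔ x hx]
  · obtain ⟨z, hz⟩ := hU.exists_pairing_eq_intCast (hS hy).2
    have hz1 : -1 ≤ z := by exact_mod_cast hz ▸ hUΔ y (hS hy).1
    have hz0 : z < 0 := by exact_mod_cast hz ▸ hneg y hy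
    rw [pairing_neg_left, hz, show z = -1 by omega]
    simp

theorem two_le_sum_erase_of_sum_mul_le {ι : Type*} [Fintype ι] [DecidableEq ι] {lam a : ι → ℝ}
    (hlam : ∀ i, 0 ≤ lam i) (ha : ∀ i, -1 ≤ a i) {k : ι} (hk : 0 ≤ a k)
    (hsum : ∑ i, lam i * a i ≤ -2) : 2 ≤ ∑ i ∈ Finset.univ.erase k, lam i := by
  rw [← Finset.add_sum_erase _ _ (Finset.mem_univ k)] at hsum
  have hle : ∑ i ∈ Finset.univ.erase k, -lam i ≤ ∑ i ∈ Finset.univ.erase k, lam i * a i :=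
    Finset.sum_le_sum fun i _ => by nlinarith [hlam i, ha i]
  rw [Finset.sum_neg_distrib] at hle
  nlinarith [mul_nonneg (hlam k) hk]

theorem sum_erase_add_sum_erase_lt_card {ι : Type*} [Fintype ι] [DecidableEq ι] {lam mu : ι → ℝ}
    (hlam : ∀ i, lam i < 1) (hmu : ∀ i, mu i < 1) (hsum : ∀ i, lam i + mu i ≤ 1) (k k' : ι) :
    ∑ i ∈ Finset.univ.erase k, lam i + ∑ i ∈ Finset.univ.erase k', mu i < Fintype.card ι := by
  set t : ι → ℝ := fun i => (if i = k then 0 else lam i) + (if i = k' then 0 else mu i)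
  have ht : ∀ i, t i ≤ 1 := fun i => by
    simp only [t]
    split_ifs <;> linarith [hlam i, hmu i, hsum i]
  have htk : t k < 1 := by
    simp only [t]
    split_ifs <;> linarith [hmu k]
  calc ∑ i ∈ Finset.univ.erase k, lam i + ∑ i ∈ Finset.univ.erase k', mu i = ∑ i, t i := by
        simp [t, Finset.sum_add_distrib, Finset.sum_ite, Finset.filter_ne']
    _ < ∑ _i : ι, (1 : ℝ) := Finset.sum_lt_sum (fun i _ => ht i) ⟨k, Finset.mem_univ k, htk⟩
    _ = Fintype.card ι := by simp

section HalfOpenBox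

variable {d n : ℕ} {Δ : Set (Fin d → ℝ)} {V : Fin n → Fin d → ℝ} {lam : Fin n → ℝ}

theorem sum_smul_notMem_of_mem_Ico (hli : LinearIndependent ℝ V)
    (hcone : coneOf V ∩ Δ ∩ latticePts d = insert 0 (range V))
    (hlam : ∀ i, lam i ∈ Ico 0 1) (hlam0 : lam ≠ 0) (hx : IsLatticePt (∑ i, lam i • V i)) :
    ∑ i, lam i • V i ∉ Δ := by
  intro hxΔ
  have hmem : ∑ i, lam i • V i ∈ insert 0 (range V) :=
    hcone ▸ ⟨⟨⟨lam, fun i => (hlam i).1, rfl⟩, hxΔ⟩, hx⟩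
  rcases hmem with hzero | ⟨j, hj⟩
  · exact hlam0 (funext (Fintype.linearIndependent_iff.mp hli lam hzero))
  · have hlamj := Fintype.linearIndependent_iffₛ.mp hli lam (Pi.single j 1) (by simp [hj]) j
    simp only [Pi.single_eq_same] at hlamj
    exact (hlam j).2.ne hlamj

theorem range_subset_of_coneOf_inter_eq
    (hcone : coneOf V ∩ Δ ∩ latticePts d = insert 0 (range V)) : range V ⊆ Δ ∩ latticePts d :=
  fun _ hx => by
    have hx' : _ ∈ coneOf V ∩ Δ ∩ latticePts d := hcone ▸ mem_insert_of_mem 0 hx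
    exact ⟨hx'.1.2, hx'.2⟩

theorem exists_two_le_sum_erase_of_mem_Ico (hΔ : IsReflexive Δ) (hli : LinearIndependent ℝ V)
    (hcone : coneOf V ∩ Δ ∩ latticePts d = insert 0 (range V)) (hface : ¬ InCommonFace Δ (range V))
    (hlam : ∀ i, lam i ∈ Ico 0 1) (hlam0 : lam ≠ 0) (hx : IsLatticePt (∑ i, lam i • V i)) :
    ∃ k, 2 ≤ ∑ i ∈ Finset.univ.erase k, lam i := by
  have hV := range_subset_of_coneOf_inter_eq hcone
  obtain ⟨U, hU, hUΔ, hUx⟩ := exists_latticePt_mem_dualPolytope_pairing_le hΔ hx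
    (sum_smul_notMem_of_mem_Ico hli hcone hlam hlam0 hx)
  obtain ⟨_, ⟨k, rfl⟩, hk⟩ := exists_nonneg_pairing_of_not_inCommonFace hU hUΔ hV hface
  refine ⟨k, two_le_sum_erase_of_sum_mul_le (fun i => (hlam i).1)
    (fun i => hUΔ _ (hV ⟨i, rfl⟩).1) hk ?_⟩
  simpa [pairing_eq_dotProduct, dotProduct_sum, mul_comm] using hUx

theorem exists_reflection_of_mem_Ico (hV : ∀ i, IsLatticePt (V i)) (hlam : ∀ i, lam i ∈ Ico 0 1)
    (hlam0 : lam ≠ 0) (hx : IsLatticePt (∑ i, lam i • V i)) :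
    ∃ mu : Fin n → ℝ, (∀ i, mu i ∈ Ico 0 1) ∧ mu ≠ 0 ∧ (∀ i, lam i + mu i ≤ 1) ∧
      IsLatticePt (∑ i, mu i • V i) := by
  classical
  set ε : Fin n → ℤ := fun i => if lam i = 0 then 0 else 1
  refine ⟨fun i => ε i - lam i, fun i => ?_, fun hmu => hlam0 (funext fun i => ?_),
    fun i => ?_, ?_⟩
  · obtain ⟨h0, h1⟩ := hlam i
    by_cases h : lam i = 0
    · simp [ε, h]
    · simp only [ε, h, if_false, Int.cast_one, mem_Ico, sub_nonneg, sub_lt_self_iff]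
      exact ⟨h1.le, lt_of_le_of_ne h0 (Ne.symm h)⟩
  · have hi := congrFun hmu i
    by_cases h : lam i = 0
    · exact h
    · simp only [ε, h, if_false, Int.cast_one, Pi.zero_apply, sub_eq_zero] at hi
      exact absurd hi.symm (hlam i).2.ne
  · by_cases h : lam i = 0 <;> simp [ε, h]
  · simp only [isLatticePt_iff_mem_range, sub_smul, Finset.sum_sub_distrib,
      Int.cast_smul_eq_zsmul] at hx hV ⊢
    exact sub_mem (sum_mem fun i _ => zsmul_mem (hV i) _) hx

end HalfOpenBox

theorem eq_zero_of_mem_Ico_of_isLatticePt {d : ℕ} {Δ : Set (Fin d → ℝ)} {V : Fin 4 → Fin d → ℝ}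
    (hΔ : IsReflexive Δ) (hli : LinearIndependent ℝ V)
    (hcone : coneOf V ∩ Δ ∩ latticePts d = insert 0 (range V)) (hface : ¬ InCommonFace Δ (range V))
    {lam : Fin 4 → ℝ} (hlam : ∀ i, lam i ∈ Ico 0 1) (hx : IsLatticePt (∑ i, lam i • V i)) :
    lam = 0 := by
  by_contra hlam0
  obtain ⟨mu, hmu, hmu0, hsum, hmux⟩ := exists_reflection_of_mem_Ico
    (fun i => (range_subset_of_coneOf_inter_eq hcone ⟨i, rfl⟩).2) hlam hlam0 hx
  obtain ⟨k, hk⟩ := exists_two_le_sum_erase_of_mem_Ico hΔ hli hcone hface hlam hlam0 hx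
  obtain ⟨k', hk'⟩ := exists_two_le_sum_erase_of_mem_Ico hΔ hli hcone hface hmu hmu0 hmux
  have hlt := sum_erase_add_sum_erase_lt_card (fun i => (hlam i).2) (fun i => (hmu i).2) hsum k k'
  simp only [Fintype.card_fin, Nat.cast_ofNat] at hlt
  linarith

theorem isTorsionFree_quotient_span_of_mem_Ico {d n : ℕ} {v : Fin n → Fin d → ℤ}
    (hbox : ∀ lam : Fin n → ℝ, (∀ i, lam i ∈ Ico 0 1) →
      IsLatticePt (∑ i, lam i • toRealVec (v i)) → lam = 0) :
    Module.IsTorsionFree ℤ ((Fin d → ℤ) ⧸ Submodule.span ℤ (range v)) := by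
  refine .of_smul_eq_zero fun c q hcq => ?_
  obtain ⟨x, rfl⟩ := Submodule.Quotient.mk_surjective _ q
  rw [← Submodule.Quotient.mk_smul, Submodule.Quotient.mk_eq_zero] at hcq
  rw [or_iff_not_imp_left, Submodule.Quotient.mk_eq_zero]
  intro hc
  obtain ⟨a, ha⟩ := (Submodule.mem_span_range_iff_exists_fun ℤ).mp hcq
  set q : Fin n → ℝ := fun i => a i / c
  have hx : toRealVec x = ∑ i, q i • toRealVec (v i) := by
    have hcR : (c : ℝ) ≠ 0 := Int.cast_ne_zero.mpr hc
    have hcx := congrArg toRealVec ha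
    rw [toRealVec_sum_smul, toRealVec_smul] at hcx
    rw [← inv_smul_smul₀ hcR (toRealVec x), ← hcx, Finset.smul_sum]
    simp only [smul_smul, q, div_eq_inv_mul]
  have hlat : IsLatticePt (∑ i, Int.fract (q i) • toRealVec (v i)) := by
    have hsub : ∑ i, Int.fract (q i) • toRealVec (v i) = toRealVec (x - ∑ i, ⌊q i⌋ • v i) := by
      rw [toRealVec_sub, toRealVec_sum_smul, hx, ← Finset.sum_sub_distrib]
      simp only [← sub_smul, Int.self_sub_floor]
    exact hsub ▸ isLatticePt_toRealVec _
  have hfract := hbox _ (fun i => ⟨Int.fract_nonneg (q i), Int.fract_lt_one (q i)⟩) hlat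
  have hxsum : x = ∑ i, ⌊q i⌋ • v i := toRealVec_injective <| by
    rw [hx, toRealVec_sum_smul]
    refine Finset.sum_congr rfl fun i _ => ?_
    rw [← Int.self_sub_fract (q i), congrFun hfract i, Pi.zero_apply, sub_zero]
  rw [hxsum]
  exact sum_mem fun i _ => Submodule.smul_mem _ _ (Submodule.subset_span ⟨i, rfl⟩)

theorem Submodule.exists_isCompl_of_isTorsionFree_quotient {R M : Type*} [CommRing R] [IsDomain R]
    [IsPrincipalIdealRing R] [AddCommGroup M] [Module R M] [Module.Finite R M]
    (N : Submodule R M) [Module.IsTorsionFree R (M ⧸ N)] : ∃ C : Submodule R M, IsCompl N C := by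
  obtain ⟨s, hs⟩ := N.mkQ.exists_rightInverse_of_surjective N.range_mkQ
  have hsec : ∀ q, N.mkQ (s q) = q := LinearMap.congr_fun hs
  have hproj : ∀ x, x - s (N.mkQ x) ∈ N := fun x => by
    rw [← Submodule.Quotient.mk_eq_zero, Submodule.Quotient.mk_sub]
    exact sub_eq_zero.mpr (hsec _).symm
  refine ⟨_, LinearMap.isCompl_of_proj (f := (LinearMap.id - s ∘ₗ N.mkQ).codRestrict N hproj) ?_⟩
  intro x
  ext
  simp [(Submodule.Quotient.mk_eq_zero N).mpr x.2]

theorem Module.Basis.exists_range_subset_of_isTorsionFree_quotient {R M ι κ : Type*} [CommRing R]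
    [IsDomain R] [IsPrincipalIdealRing R] [AddCommGroup M] [Module R M] [Finite ι]
    (b : Module.Basis ι R M) {v : κ → M} (hv : LinearIndependent R v)
    [Module.IsTorsionFree R (M ⧸ Submodule.span R (range v))] :
    ∃ B : Module.Basis ι R M, range v ⊆ range B := by
  have := Module.Finite.of_basis b
  have := Module.Free.of_basis b
  obtain ⟨C, hC⟩ := (Submodule.span R (range v)).exists_isCompl_of_isTorsionFree_quotient
  let B := ((Module.Basis.span hv).prod (Module.Free.chooseBasis R C)).map
    (Submodule.prodEquivOfIsCompl _ C hC)
  refine ⟨B.reindex (B.indexEquiv b), ?_⟩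
  rintro _ ⟨i, rfl⟩
  refine ⟨B.indexEquiv b (.inl i), ?_⟩
  simp [B, Module.Basis.span_apply]

theorem four_dimensional_cone_unimodular_of_not_in_common_face_general
    (d : ℕ) (Δ : Set (Fin d → ℝ)) (hΔ : IsReflexive Δ)
    (v : Fin 4 → (Fin d → ℤ))
    (hli : LinearIndependent ℝ (fun i => toRealVec (v i)))
    (hcone : coneOf (fun i => toRealVec (v i)) ∩ Δ ∩ latticePts d
      = insert (0 : Fin d → ℝ) (Set.range fun i => toRealVec (v i)))
    (hface : ¬ InCommonFace Δ (Set.range fun i => toRealVec (v i))) :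
    ∃ B : Module.Basis (Fin d) ℤ (Fin d → ℤ), Set.range v ⊆ Set.range ⇑B := by
  have := isTorsionFree_quotient_span_of_mem_Ico fun _ hlam hx =>
    eq_zero_of_mem_Ico_of_isLatticePt hΔ hli hcone hface hlam hx
  have hliZ : LinearIndependent ℤ v :=
    .of_comp ((Int.castAddHom ℝ).compLeft (Fin d)).toIntLinearMap (hli.restrict_scalars' ℤ)
  exact (Pi.basisFun ℤ (Fin d)).exists_range_subset_of_isTorsionFree_quotient hliZ

/-- For a reflexive polytope `Δ ⊆ ℝ^d` and linearly independent
lattice points `v₁,…,v₄ ∈ Δ` with `Cone(v₁,…,v₄) ∩ Δ ∩ ℤ^d = {0,v₁,…,v₄}` which do not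
lie in a common proper face of `Δ`, the points `v₁,…,v₄` extend to a ℤ-basis of `ℤ^d`. -/
theorem four_dimensional_cone_unimodular_of_not_in_common_face
    (d : ℕ) (Δ : Set (Fin d → ℝ)) (hΔ : IsReflexive Δ)
    (v : Fin 4 → (Fin d → ℤ))
    (hvΔ : ∀ i, toRealVec (v i) ∈ Δ)
    (hli : LinearIndependent ℝ (fun i => toRealVec (v i)))
    (hcone : coneOf (fun i => toRealVec (v i)) ∩ Δ ∩ latticePts d
      = insert (0 : Fin d → ℝ) (Set.range fun i => toRealVec (v i)))
    (hface : ¬ InCommonFace Δ (Set.range fun i => toRealVec (v i))) :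
    ∃ B : Module.Basis (Fin d) ℤ (Fin d → ℤ), Set.range v ⊆ Set.range ⇑B :=
  four_dimensional_cone_unimodular_of_not_in_common_face_general d Δ hΔ v hli hcone hface
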